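/- arXiv:1207.4598 — 2 statements merged into one kernel-verified Lean document; each statement's English description precedes it below -/
import Mathlib

section
/- 2D hypervolume formula: if p_1, ..., p_n ∈ [0,1]^2 are points with strictly decreasing second coordinates and strictly increasing first coordinates (a 2D Pareto front sorted by x), then the area of ⋃_k B(p_k) equals ∑_{k=1}^{n} (x_k − x_{k−1}) · y_k where x_0 = 0. -/
/-! Adding the boxes one at a time, the new box `[0, x_{n+1}] × [0, y_{n+1}]` meets the region
already covered exactly in `[0, x_n] × [0, y_{n+1}]`, because the earlier boxes reach no
further right than `x_n` and all stand at least as high as `y_{n+1}`. By inclusion–exclusion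
each step adds the strip area `(x_{n+1} - x_n) · y_{n+1}`. -/

open MeasureTheory Set

def paretoRegion (x y : ℕ → ℝ) (n : ℕ) : Set (ℝ × ℝ) :=
  ⋃ k ∈ Finset.Icc 1 n, Icc 0 (x k) ×ˢ Icc 0 (y k)

theorem volume_Icc_zero_prod_Icc_zero {a : ℝ} (ha : 0 ≤ a) (b : ℝ) :
    volume (Icc 0 a ×ˢ Icc 0 b) = ENNReal.ofReal (a * b) := by
  rw [Measure.volume_eq_prod, Measure.prod_prod, Real.volume_Icc, Real.volume_Icc, sub_zero,
    sub_zero, ENNReal.ofReal_mul ha]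

namespace paretoRegion

variable {x y : ℕ → ℝ} {n : ℕ}

theorem succ (x y : ℕ → ℝ) (n : ℕ) :
    paretoRegion x y (n + 1) = paretoRegion x y n ∪ Icc 0 (x (n + 1)) ×ˢ Icc 0 (y (n + 1)) := by
  rw [paretoRegion, paretoRegion,
    ← Finset.insert_Icc_right_eq_Icc_add_one (by omega : 1 ≤ n + 1),
    Finset.set_biUnion_insert, union_comm]

theorem inter_Icc_prod_Icc (hn : 1 ≤ n) (hx : MonotoneOn x (Icc 1 (n + 1)))
    (hy : y (n + 1) ≤ y n) :
    paretoRegion x y n ∩ Icc 0 (x (n + 1)) ×ˢ Icc 0 (y (n + 1)) =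
      Icc 0 (x n) ×ˢ Icc 0 (y (n + 1)) := by
  have hx_le : ∀ k ∈ Finset.Icc 1 n, x k ≤ x n := fun k hk => by
    rw [Finset.mem_Icc] at hk
    exact hx ⟨hk.1, by omega⟩ ⟨hn, by omega⟩ hk.2
  have hxn : x n ≤ x (n + 1) := hx ⟨hn, by omega⟩ ⟨by omega, le_rfl⟩ (by omega)
  ext ⟨a, b⟩
  simp only [paretoRegion, mem_inter_iff, mem_iUnion, mem_prod, mem_Icc, exists_prop]
  constructor
  · rintro ⟨⟨k, hk, ⟨ha0, hak⟩, -⟩, -, hb⟩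
    exact ⟨⟨ha0, hak.trans (hx_le k hk)⟩, hb⟩
  · rintro ⟨⟨ha0, han⟩, hb0, hb⟩
    exact ⟨⟨n, Finset.mem_Icc.2 ⟨hn, le_rfl⟩, ⟨ha0, han⟩, hb0, hb.trans hy⟩,
      ⟨ha0, han.trans hxn⟩, hb0, hb⟩

theorem volume_succ (hn : 1 ≤ n) (hx : MonotoneOn x (Icc 1 (n + 1))) (hy : y (n + 1) ≤ y n)
    (hxn : 0 ≤ x n) (hyn : 0 ≤ y (n + 1)) :
    volume (paretoRegion x y (n + 1)) =
      volume (paretoRegion x y n) + ENNReal.ofReal ((x (n + 1) - x n) * y (n + 1)) := by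
  have hstep : x n ≤ x (n + 1) := hx ⟨hn, by omega⟩ ⟨by omega, le_rfl⟩ (by omega)
  have hbox : MeasurableSet (Icc 0 (x (n + 1)) ×ˢ Icc 0 (y (n + 1))) :=
    measurableSet_Icc.prod measurableSet_Icc
  have hincl_excl := measure_union_add_inter (μ := volume) (paretoRegion x y n) hbox
  rw [← succ, inter_Icc_prod_Icc hn hx hy, volume_Icc_zero_prod_Icc_zero hxn,
    volume_Icc_zero_prod_Icc_zero (hxn.trans hstep),
    show x (n + 1) * y (n + 1) = (x (n + 1) - x n) * y (n + 1) + x n * y (n + 1) by ring,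
    ENNReal.ofReal_add (mul_nonneg (sub_nonneg.2 hstep) hyn) (mul_nonneg hxn hyn),
    ← add_assoc] at hincl_excl
  exact (ENNReal.add_left_inj ENNReal.ofReal_ne_top).1 hincl_excl

theorem volume_eq_sum (hx0 : x 0 = 0) (hx : MonotoneOn x (Icc 0 n)) (hy : AntitoneOn y (Icc 1 n))
    (hyn : 0 ≤ y n) :
    volume (paretoRegion x y n) =
      ∑ k ∈ Finset.Icc 1 n, ENNReal.ofReal ((x k - x (k - 1)) * y k) := by
  induction n with
  | zero => simp [paretoRegion]
  | succ n ih =>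
    obtain rfl | hn := Nat.eq_zero_or_pos n
    · have hx1 : 0 ≤ x 1 := hx0 ▸ hx ⟨le_rfl, by omega⟩ ⟨by omega, le_rfl⟩ (by omega)
      simp only [paretoRegion, zero_add, Finset.Icc_self, Finset.set_biUnion_singleton,
        Finset.sum_singleton, volume_Icc_zero_prod_Icc_zero hx1, Nat.sub_self, hx0, sub_zero]
    · have hy_step : y (n + 1) ≤ y n := hy ⟨hn, by omega⟩ ⟨by omega, le_rfl⟩ (by omega)
      rw [volume_succ hn (hx.mono (Icc_subset_Icc_left (by omega))) hy_step
          (hx0 ▸ hx ⟨le_rfl, by omega⟩ ⟨by omega, by omega⟩ (by omega)) hyn,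
        ih (hx.mono (Icc_subset_Icc_right (by omega))) (hy.mono (Icc_subset_Icc_right (by omega)))
          (hyn.trans hy_step),
        Finset.sum_Icc_succ_top (by omega), Nat.add_sub_cancel]

theorem volume_eq_ofReal_sum (hx0 : x 0 = 0) (hx : MonotoneOn x (Icc 0 n))
    (hy : AntitoneOn y (Icc 1 n)) (hyn : 0 ≤ y n) :
    volume (paretoRegion x y n) =
      ENNReal.ofReal (∑ k ∈ Finset.Icc 1 n, (x k - x (k - 1)) * y k) := by
  rw [ENNReal.ofReal_sum_of_nonneg, volume_eq_sum hx0 hx hy hyn]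
  intro k hk
  rw [Finset.mem_Icc] at hk
  exact mul_nonneg (sub_nonneg.2 (hx ⟨by omega, by omega⟩ ⟨by omega, hk.2⟩ (by omega)))
    (hyn.trans (hy ⟨hk.1, hk.2⟩ ⟨by omega, le_rfl⟩ hk.2))

end paretoRegion

theorem area_pareto_front_2d_general (n : ℕ) (x y : ℕ → ℝ)
    (hx0 : x 0 = 0)
    (hx1 : 0 ≤ x 1)
    (hxmono : ∀ k, 1 ≤ k → k < n → x k < x (k + 1))
    (hyn : 0 ≤ y n)
    (hyanti : ∀ k, 1 ≤ k → k < n → y (k + 1) < y k) :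
    volume (⋃ k ∈ Finset.Icc 1 n, Set.Icc (0:ℝ) (x k) ×ˢ Set.Icc (0:ℝ) (y k)) =
      ENNReal.ofReal (∑ k ∈ Finset.Icc 1 n, (x k - x (k - 1)) * y k) := by
  have hx : MonotoneOn x (Set.Icc 0 n) := monotoneOn_of_le_succ Set.ordConnected_Icc
    fun k _ hk hk' => by
      rw [Order.succ_eq_add_one] at hk' ⊢
      obtain rfl | hk1 := Nat.eq_zero_or_pos k
      · simpa [hx0] using hx1
      · exact (hxmono k hk1 hk'.2).le
  have hy : AntitoneOn y (Set.Icc 1 n) := antitoneOn_of_succ_le Set.ordConnected_Icc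
    fun k _ hk hk' => by
      rw [Order.succ_eq_add_one] at hk' ⊢
      exact (hyanti k hk.1 hk'.2).le
  exact paretoRegion.volume_eq_ofReal_sum hx0 hx hy hyn

/-- 2D hypervolume formula: for a 2D Pareto front `p_k = (x_k, y_k)`, `k = 1, …, n`, with
`0 ≤ x_1 < ⋯ < x_n ≤ 1` and `1 ≥ y_1 > ⋯ > y_n ≥ 0`, the area of `⋃_k [0,x_k] × [0,y_k]`
equals `∑_{k=1}^n (x_k − x_{k−1})·y_k` where `x_0 = 0`. -/
theorem area_pareto_front_2d (n : ℕ) (x y : ℕ → ℝ)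
    (hx0 : x 0 = 0)
    (hx1 : 0 ≤ x 1) (hxn : x n ≤ 1)
    (hxmono : ∀ k, 1 ≤ k → k < n → x k < x (k + 1))
    (hy1 : y 1 ≤ 1) (hyn : 0 ≤ y n)
    (hyanti : ∀ k, 1 ≤ k → k < n → y (k + 1) < y k) :
    volume (⋃ k ∈ Finset.Icc 1 n, Set.Icc (0:ℝ) (x k) ×ˢ Set.Icc (0:ℝ) (y k)) =
      ENNReal.ofReal (∑ k ∈ Finset.Icc 1 n, (x k - x (k - 1)) * y k) :=
  area_pareto_front_2d_general n x y hx0 hx1 hxmono hyn hyanti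
end

section
/- QHV pivot decomposition in 2D: let p = (a,b) ∈ [0,1]^2 be a pivot and S a finite set of points in [0,1]^2. Then the area of B(p) ∪ ⋃_{q∈S} B(q) equals a·b plus the area of the union over q ∈ S of the rectangles B(q) \ B(p) restricted to the region {x > a} plus the area restricted to {y > b}, and these two regions {x > a, y ≤ 1} and {y > b} overlap only in the quadrant {x > a, y > b}; in particular if no point of S dominates p, every B(q) \ B(p) is contained in {x > a} ∪ {y > b}. -/
open MeasureTheory

/-- 2D box from the origin to `q`. -/
def Box2 (q : ℝ × ℝ) : Set (ℝ × ℝ) := Set.Icc 0 q.1 ×ˢ Set.Icc 0 q.2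

/-!
Everything outside `B(p)` that is covered by some `B(q)` lies to the right of `p` or above it,
and it cannot lie in both places at once: a point with `x > a` and `y > b` inside `B(q)` forces
`q` to dominate `p`. So the union splits into three disjoint pieces, `B(p)` of area `a·b` and the
two slabs `{x > a}`, `{y > b}`.
-/

section MeasureSplit

variable {α : Type*} [MeasurableSpace α] {μ : Measure α}

theorem measure_eq_inter_add_inter_of_subset_union {s t u : Set α} (ht : MeasurableSet t)
    (hcover : s ⊆ t ∪ u) (hdisj : Disjoint (s ∩ t) u) :
    μ s = μ (s ∩ t) + μ (s ∩ u) := by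
  have hsdiff : s \ t = s ∩ u := by
    ext x
    constructor
    · rintro ⟨hxs, hxt⟩
      exact ⟨hxs, (hcover hxs).resolve_left hxt⟩
    · rintro ⟨hxs, hxu⟩
      exact ⟨hxs, fun hxt => Set.disjoint_left.mp hdisj ⟨hxs, hxt⟩ hxu⟩
  rw [← hsdiff, measure_inter_add_sdiff s ht]

theorem measure_union_eq_add_inter_add_inter {P T H₁ H₂ : Set α} (hP : MeasurableSet P)
    (hH₁ : MeasurableSet H₁) (hcover : T \ P ⊆ H₁ ∪ H₂) (hdisj : Disjoint ((T \ P) ∩ H₁) H₂) :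
    μ (P ∪ T) = μ P + μ ((T \ P) ∩ H₁) + μ ((T \ P) ∩ H₂) := by
  rw [← Set.union_sdiff_self, measure_union' Set.disjoint_sdiff_right hP,
    measure_eq_inter_add_inter_of_subset_union hH₁ hcover hdisj, add_assoc]

end MeasureSplit

theorem measurableSet_box2 (q : ℝ × ℝ) : MeasurableSet (Box2 q) :=
  measurableSet_Icc.prod measurableSet_Icc

theorem volume_box2 {q : ℝ × ℝ} (hq : 0 ≤ q.1) :
    volume (Box2 q) = ENNReal.ofReal (q.1 * q.2) := by
  rw [Box2, Measure.volume_eq_prod, Measure.prod_prod, Real.volume_Icc, Real.volume_Icc,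
    sub_zero, sub_zero, ENNReal.ofReal_mul hq]

theorem box2_sdiff_subset (q p : ℝ × ℝ) :
    Box2 q \ Box2 p ⊆ {x | p.1 < x.1} ∪ {x | p.2 < x.2} := by
  rintro x ⟨⟨⟨hx₁, -⟩, ⟨hx₂, -⟩⟩, hxp⟩
  by_contra h
  simp only [Set.mem_union, Set.mem_ofPred_eq, not_or, not_lt] at h
  exact hxp ⟨⟨hx₁, h.1⟩, ⟨hx₂, h.2⟩⟩

theorem lt_of_mem_box2 {p q x : ℝ × ℝ} (hx : x ∈ Box2 q) (h₁ : p.1 < x.1) (h₂ : p.2 < x.2) :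
    p < q :=
  Prod.lt_iff.mpr (Or.inl ⟨h₁.trans_le hx.1.2, h₂.le.trans hx.2.2⟩)

theorem qhv_pivot_decomposition_2d_general (a b : ℝ) (ha : a ∈ Set.Icc (0:ℝ) 1)
    (S : Finset (ℝ × ℝ))
    (hnd : ∀ q ∈ S, ¬ ((a ≤ q.1 ∧ b ≤ q.2) ∧ q ≠ (a, b))) :
    volume (Box2 (a, b) ∪ ⋃ q ∈ S, Box2 q) =
        ENNReal.ofReal (a * b)
          + volume ((⋃ q ∈ S, Box2 q \ Box2 (a, b)) ∩ {x : ℝ × ℝ | a < x.1})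
          + volume ((⋃ q ∈ S, Box2 q \ Box2 (a, b)) ∩ {x : ℝ × ℝ | b < x.2}) ∧
    ({x : ℝ × ℝ | a < x.1 ∧ x.2 ≤ 1} ∩ {x : ℝ × ℝ | b < x.2})
        ⊆ {x : ℝ × ℝ | a < x.1 ∧ b < x.2} ∧
    ∀ q ∈ S, Box2 q \ Box2 (a, b) ⊆ {x : ℝ × ℝ | a < x.1} ∪ {x : ℝ × ℝ | b < x.2} := by
  have hnot_lt : ∀ q ∈ S, ¬ (a, b) < q := fun q hq hlt =>
    hnd q hq ⟨Prod.mk_le_mk.mp hlt.le, hlt.ne'⟩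
  refine ⟨?_, fun x hx => ⟨hx.1.1, hx.2⟩, fun q _ => box2_sdiff_subset q (a, b)⟩
  simp only [← Set.iUnion_sdiff]
  rw [measure_union_eq_add_inter_add_inter (measurableSet_box2 _)
    (measurableSet_lt measurable_const measurable_fst), volume_box2 ha.1]
  · simp only [Set.iUnion_sdiff]
    exact Set.iUnion₂_subset fun q _ => box2_sdiff_subset q (a, b)
  · refine Set.disjoint_left.mpr fun x ⟨⟨hxT, _⟩, hxa⟩ hxb => ?_
    obtain ⟨q, hq, hxq⟩ := Set.mem_iUnion₂.mp hxT
    exact hnot_lt q hq (lt_of_mem_box2 hxq hxa hxb)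

/-- QHV pivot decomposition in 2D: for a pivot `p = (a,b) ∈ [0,1]²` and a finite set `S`
of points of `[0,1]²` none of which dominates `p`, the area of `B(p) ∪ ⋃_{q∈S} B(q)`
splits as `a·b` plus the parts of `⋃ (B(q) \ B(p))` in the half-planes `{x > a}` and
`{y > b}`; the regions `{x > a, y ≤ 1}` and `{y > b}` overlap only in `{x > a, y > b}`,
and each `B(q) \ B(p)` is contained in `{x > a} ∪ {y > b}`. -/
theorem qhv_pivot_decomposition_2d (a b : ℝ) (ha : a ∈ Set.Icc (0:ℝ) 1)
    (hb : b ∈ Set.Icc (0:ℝ) 1) (S : Finset (ℝ × ℝ))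
    (hS : ∀ q ∈ S, q.1 ∈ Set.Icc (0:ℝ) 1 ∧ q.2 ∈ Set.Icc (0:ℝ) 1)
    (hnd : ∀ q ∈ S, ¬ ((a ≤ q.1 ∧ b ≤ q.2) ∧ q ≠ (a, b))) :
    volume (Box2 (a, b) ∪ ⋃ q ∈ S, Box2 q) =
        ENNReal.ofReal (a * b)
          + volume ((⋃ q ∈ S, Box2 q \ Box2 (a, b)) ∩ {x : ℝ × ℝ | a < x.1})
          + volume ((⋃ q ∈ S, Box2 q \ Box2 (a, b)) ∩ {x : ℝ × ℝ | b < x.2}) ∧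
    ({x : ℝ × ℝ | a < x.1 ∧ x.2 ≤ 1} ∩ {x : ℝ × ℝ | b < x.2})
        ⊆ {x : ℝ × ℝ | a < x.1 ∧ b < x.2} ∧
    ∀ q ∈ S, Box2 q \ Box2 (a, b) ⊆ {x : ℝ × ℝ | a < x.1} ∪ {x : ℝ × ℝ | b < x.2} :=
  qhv_pivot_decomposition_2d_general a b ha S hnd
end
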